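/- arXiv:2506.05478 — 2 statements merged into one kernel-verified Lean document; each statement's English description precedes it below -/
import Mathlib

section
/- Let d be a prime, n ≥ 2, Γ a symmetric n×n matrix over ZMod d with zero diagonal, and k : Fin n a vertex. Let Γ' be the (n−1)×(n−1) matrix obtained from Γ by deleting row and column k (the adjacency matrix of the graph with vertex k removed). Then the Schmidt ranks of the corresponding graph states satisfy r(ψ_{Γ'}) ≤ r(ψ_Γ) ≤ d · r(ψ_{Γ'}). In particular, upon removal of a vertex the Schmidt measure E_S = log_d r can decrease by at most 1 and cannot increase. -/
/-!
Deleting vertex `k` splits the amplitude as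
`ψ_Γ(x) = d^(-1/2) · ω^(x_k · Σ_j Γ_kj x_j) · ψ_Γ'(x')`, where `x'` is `x` without its
`k`-th coordinate. At `x_k = 0` the phase vanishes, so `ψ_Γ'` is a multiple of a restriction of
`ψ_Γ`, and fixing one tensor factor never increases the Schmidt rank. Conversely, for each of
the `d` values `a` of `x_k` the phase `ω^(a · Σ_j Γ_kj x_j)` is itself a product function, so
`ψ_Γ` is a sum of `d` functions of Schmidt rank at most `r(ψ_Γ')`.
-/

/-- The graph-state amplitude function of an adjacency matrix `Γ` over `ZMod d`. -/
noncomputable def graphState (d n : ℕ) (ω : ℂ) (Γ : Matrix (Fin n) (Fin n) (ZMod d)) :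
    (Fin n → ZMod d) → ℂ := fun x =>
  (((d : ℝ) ^ (-(n : ℝ) / 2) : ℝ) : ℂ) *
    ω ^ (∑ u : Fin n, ∑ v : Fin n, if u < v then Γ u v * x u * x v else 0).val

/-- The Schmidt rank of `ψ : (Fin n → ZMod d) → ℂ`: the least `R` such that `ψ` is a
sum of `R` product functions. -/
noncomputable def schmidtRank {d n : ℕ} (ψ : (Fin n → ZMod d) → ℂ) : ℕ :=
  sInf {R : ℕ | ∃ f : Fin R → Fin n → ZMod d → ℂ, ∀ x, ψ x = ∑ i, ∏ j, f i j (x j)}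

open Finset

theorem AddChar.map_sum_eq_prod {ι A M : Type*} [AddCommMonoid A] [CommMonoid M]
    (ψ : AddChar A M) (s : Finset ι) (g : ι → A) :
    ψ (∑ i ∈ s, g i) = ∏ i ∈ s, ψ (g i) :=
  map_prod ψ.toMonoidHom (fun i => Multiplicative.ofAdd (g i)) s

def HasSchmidtDecomposition {d n : ℕ} (ψ : (Fin n → ZMod d) → ℂ) (R : ℕ) : Prop :=
  ∃ f : Fin R → Fin n → ZMod d → ℂ, ∀ x, ψ x = ∑ i, ∏ j, f i j (x j)

section SchmidtDecomposition

variable {d n : ℕ}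

theorem schmidtRank_le {ψ : (Fin n → ZMod d) → ℂ} {R : ℕ}
    (h : HasSchmidtDecomposition ψ R) : schmidtRank ψ ≤ R :=
  Nat.sInf_le h

theorem HasSchmidtDecomposition.of_fintype {ψ : (Fin n → ZMod d) → ℂ} {ι : Type*}
    [Fintype ι] (f : ι → Fin n → ZMod d → ℂ)
    (h : ∀ x, ψ x = ∑ i, ∏ j, f i j (x j)) :
    HasSchmidtDecomposition ψ (Fintype.card ι) :=
  ⟨fun i => f ((Fintype.equivFin ι).symm i), fun x => by
    rw [h, (Fintype.equivFin ι).symm.sum_comp fun i => ∏ j, f i j (x j)]⟩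

theorem HasSchmidtDecomposition.of_sum_mul_prod [NeZero n] {ψ : (Fin n → ZMod d) → ℂ}
    {ι : Type*} [Fintype ι] (c : ι → ℂ) (f : ι → Fin n → ZMod d → ℂ)
    (h : ∀ x, ψ x = ∑ i, c i * ∏ j, f i j (x j)) :
    HasSchmidtDecomposition ψ (Fintype.card ι) := by
  classical
  refine .of_fintype (fun i j z => (if j = 0 then c i else 1) * f i j z) fun x => ?_
  simp only [prod_mul_distrib, prod_ite_eq', mem_univ, if_true, h]

theorem hasSchmidtDecomposition_schmidtRank [NeZero d] [NeZero n]
    (ψ : (Fin n → ZMod d) → ℂ) : HasSchmidtDecomposition ψ (schmidtRank ψ) := by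
  classical
  refine Nat.sInf_mem (s := {R | HasSchmidtDecomposition ψ R})
    ⟨_, .of_sum_mul_prod ψ (fun y j z => if z = y j then 1 else 0) fun x => ?_⟩
  simp [prod_ite_zero, ← funext_iff]

theorem schmidtRank_mul_insertNth_le [NeZero d] {m : ℕ} [NeZero m]
    (ψ : (Fin (m + 1) → ZMod d) → ℂ) (k : Fin (m + 1)) (a : ZMod d) (c : ℂ) :
    schmidtRank (fun x => c * ψ (k.insertNth a x)) ≤ schmidtRank ψ := by
  obtain ⟨f, hf⟩ := hasSchmidtDecomposition_schmidtRank ψ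
  simpa using schmidtRank_le (.of_sum_mul_prod (fun i => c * f i k a)
    (fun i j => f i (k.succAbove j)) fun x => by
      simp [hf, Fin.prod_univ_succAbove _ k, mul_sum, mul_assoc])

theorem HasSchmidtDecomposition.of_controlled [NeZero d] {m R : ℕ}
    {ψ : (Fin (m + 1) → ZMod d) → ℂ} {φ : (Fin m → ZMod d) → ℂ} (k : Fin (m + 1))
    (c : ZMod d → ℂ) (g : ZMod d → Fin m → ZMod d → ℂ)
    (hψ : ∀ x, ψ x = c (x k) * (∏ j, g (x k) j (x (k.succAbove j))) * φ (x ∘ k.succAbove))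
    (hφ : HasSchmidtDecomposition φ R) :
    HasSchmidtDecomposition ψ (d * R) := by
  classical
  obtain ⟨f, hf⟩ := hφ
  have hdecomp := HasSchmidtDecomposition.of_fintype (ψ := ψ) (ι := ZMod d × Fin R)
    (fun p => k.insertNth (fun z => if z = p.1 then c p.1 else 0)
      (fun j z => g p.1 j z * f p.2 j z)) fun x => ?_
  · simpa [ZMod.card] using hdecomp
  rw [Fintype.sum_prod_type]
  simp [Fin.prod_univ_succAbove _ k, ite_mul, hψ, hf, prod_mul_distrib, mul_sum, mul_assoc]

end SchmidtDecomposition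

def graphPhase {R : Type*} [CommRing R] {n : ℕ} (Γ : Matrix (Fin n) (Fin n) R)
    (x : Fin n → R) : R :=
  ∑ u, ∑ v, if u < v then Γ u v * x u * x v else 0

theorem graphPhase_succAbove {R : Type*} [CommRing R] {n : ℕ}
    {Γ : Matrix (Fin (n + 1)) (Fin (n + 1)) R} (hΓ : Γ.IsSymm) (k : Fin (n + 1))
    (x : Fin (n + 1) → R) :
    graphPhase Γ x = graphPhase (Γ.submatrix k.succAbove k.succAbove) (x ∘ k.succAbove)
      + x k * ∑ j, Γ k (k.succAbove j) * x (k.succAbove j) := by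
  have hcross : ∀ j, ((if k < k.succAbove j then Γ k (k.succAbove j) * x k * x (k.succAbove j)
      else 0) + if k.succAbove j < k then Γ (k.succAbove j) k * x (k.succAbove j) * x k else 0)
      = x k * (Γ k (k.succAbove j) * x (k.succAbove j)) := by
    intro j
    rw [hΓ.apply (k.succAbove j) k]
    rcases (Fin.succAbove_ne k j).lt_or_gt with h | h
    · simp [h, h.not_gt]; ring
    · simp [h, h.not_gt]; ring
  simp only [graphPhase, Fin.sum_univ_succAbove _ k, lt_self_iff_false, if_false, zero_add,
    Fin.succAbove_lt_succAbove_iff, Matrix.submatrix_apply, Function.comp_apply,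
    sum_add_distrib, mul_sum]
  rw [← sum_congr rfl fun j _ => hcross j, sum_add_distrib]
  ring

theorem graphState_succ_apply {d n : ℕ} [NeZero d] {ω : ℂ} (hω : ω ^ d = 1)
    {Γ : Matrix (Fin (n + 1)) (Fin (n + 1)) (ZMod d)} (hΓ : Γ.IsSymm) (k : Fin (n + 1))
    (x : Fin (n + 1) → ZMod d) :
    graphState d (n + 1) ω Γ x = (((d : ℝ) ^ (-(1 : ℝ) / 2) : ℝ) : ℂ)
      * ω ^ (x k * ∑ j, Γ k (k.succAbove j) * x (k.succAbove j)).val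
      * graphState d n ω (Γ.submatrix k.succAbove k.succAbove) (x ∘ k.succAbove) := by
  have hχ := (AddChar.zmodChar d hω).map_add_eq_mul
  simp only [AddChar.zmodChar_apply] at hχ
  have hscale : (d : ℝ) ^ (-((n + 1 : ℕ) : ℝ) / 2)
      = (d : ℝ) ^ (-(1 : ℝ) / 2) * (d : ℝ) ^ (-(n : ℝ) / 2) := by
    rw [← Real.rpow_add (by simp [Nat.pos_of_neZero d])]
    push_cast
    ring_nf
  change _ * ω ^ (graphPhase Γ x).val = _ * _ * (_ * ω ^ (graphPhase
    (Γ.submatrix k.succAbove k.succAbove) (x ∘ k.succAbove)).val)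
  rw [graphPhase_succAbove hΓ k, hχ, hscale]
  push_cast
  ring

theorem schmidtRank_vertex_removal_general
    (d n : ℕ) (hd : Nat.Prime d) (hn : 1 ≤ n)
    (ω : ℂ) (hω : IsPrimitiveRoot ω d)
    (Γ : Matrix (Fin (n + 1)) (Fin (n + 1)) (ZMod d)) (hΓsymm : Γ.IsSymm)
    (k : Fin (n + 1)) :
    schmidtRank (graphState d n ω (Γ.submatrix k.succAbove k.succAbove))
        ≤ schmidtRank (graphState d (n + 1) ω Γ) ∧
      schmidtRank (graphState d (n + 1) ω Γ)
        ≤ d * schmidtRank (graphState d n ω (Γ.submatrix k.succAbove k.succAbove)) := by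
  have : NeZero d := ⟨hd.ne_zero⟩
  have : NeZero n := ⟨by omega⟩
  have hω1 := hω.pow_eq_one
  have hsplit := graphState_succ_apply hω1 hΓsymm k
  set C : ℂ := (((d : ℝ) ^ (-(1 : ℝ) / 2) : ℝ) : ℂ)
  have hC : C ≠ 0 :=
    Complex.ofReal_ne_zero.2 (Real.rpow_pos_of_pos (by exact_mod_cast hd.pos) _).ne'
  constructor
  · calc schmidtRank (graphState d n ω (Γ.submatrix k.succAbove k.succAbove))
        = schmidtRank (fun x => C⁻¹ * graphState d (n + 1) ω Γ (k.insertNth 0 x)) := by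
          congr 1
          funext x
          simp [hsplit, Function.comp_def, hC]
      _ ≤ _ := schmidtRank_mul_insertNth_le _ k 0 C⁻¹
  · refine schmidtRank_le ((hasSchmidtDecomposition_schmidtRank _).of_controlled k (fun _ => C)
      (fun a j z => ω ^ (a * (Γ k (k.succAbove j) * z)).val) fun x => ?_)
    rw [hsplit, mul_sum, ← AddChar.zmodChar_apply hω1, AddChar.map_sum_eq_prod]
    rfl

/-- Removing a vertex `k` from the graph (deleting row and column `k` of the adjacency
matrix) cannot increase the Schmidt rank of the graph state, and can decrease it by a
factor of at most `d`; i.e., the Schmidt measure `E_S = log_d r` can decrease by at most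
`1` and cannot increase. -/
theorem schmidtRank_vertex_removal
    (d n : ℕ) (hd : Nat.Prime d) (hn : 1 ≤ n)
    (ω : ℂ) (hω : IsPrimitiveRoot ω d)
    (Γ : Matrix (Fin (n + 1)) (Fin (n + 1)) (ZMod d)) (hΓsymm : Γ.IsSymm)
    (hΓdiag : ∀ u, Γ u u = 0) (k : Fin (n + 1)) :
    schmidtRank (graphState d n ω (Γ.submatrix k.succAbove k.succAbove))
        ≤ schmidtRank (graphState d (n + 1) ω Γ) ∧
      schmidtRank (graphState d (n + 1) ω Γ)
        ≤ d * schmidtRank (graphState d n ω (Γ.submatrix k.succAbove k.succAbove)) :=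
  schmidtRank_vertex_removal_general d n hd hn ω hω Γ hΓsymm k
end

section
/- Let d be a prime, n ≥ 1, and Γ a symmetric n×n matrix over ZMod d with zero diagonal whose associated weighted graph is two-colorable with parts A, B (Γ u v = 0 whenever u,v ∈ A or u,v ∈ B), and suppose Γ is invertible as a matrix over ZMod d. Then n is even, |A| = |B| = n/2, and the Schmidt rank of the graph state is exactly r(ψ_Γ) = d ^ (n/2); equivalently, the Schmidt measure attains its maximal value E_S(ψ_Γ) = ⌊n/2⌋. -/
open Matrix

namespace Equiv

variable {ι : Type*} {p : ι → Prop} [DecidablePred p] {β : ι → Type*}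

@[simp]
lemma piEquivPiSubtypeProd_symm_apply_of_pos
    (f : ((i : {i // p i}) → β i) × ((i : {i // ¬p i}) → β i)) (i : {i // p i}) :
    (piEquivPiSubtypeProd p β).symm f i = f.1 i :=
  congrFun (congrArg Prod.fst ((piEquivPiSubtypeProd p β).apply_symm_apply f)) i

@[simp]
lemma piEquivPiSubtypeProd_symm_apply_of_neg
    (f : ((i : {i // p i}) → β i) × ((i : {i // ¬p i}) → β i)) (i : {i // ¬p i}) :
    (piEquivPiSubtypeProd p β).symm f i = f.2 i :=
  congrFun (congrArg Prod.snd ((piEquivPiSubtypeProd p β).apply_symm_apply f)) i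

end Equiv

namespace AddChar

variable {A M ι : Type*} [AddCommMonoid A] [CommMonoid M]

lemma map_finsetSum (ψ : AddChar A M) (s : Finset ι) (f : ι → A) :
    ψ (∑ i ∈ s, f i) = ∏ i ∈ s, ψ (f i) :=
  map_prod ψ.toMonoidHom (fun i => Multiplicative.ofAdd (f i)) s

variable {R : Type*} [CommRing R] [Fintype R] [DecidableEq R] {β : Type*} [Fintype β]
  [DecidableEq β]

lemma sum_apply_dotProduct {K : Type*} [CommRing K] [IsDomain K] {ψ : AddChar R K}
    (hψ : ψ.IsPrimitive) (w : β → R) :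
    ∑ b : β → R, ψ (w ⬝ᵥ b) = if w = 0 then (Fintype.card R : K) ^ Fintype.card β else 0 := by
  simp_rw [dotProduct, map_finsetSum, ← Fintype.prod_sum (fun v t => ψ (w v * t)),
    mul_comm (w _), sum_mulShift _ hψ]
  split_ifs with hw
  · simp [hw]
  · obtain ⟨v, hv⟩ : ∃ v, w v ≠ 0 := Function.ne_iff.1 hw
    exact Finset.prod_eq_zero (Finset.mem_univ v) (by simp [hv])

lemma rank_of_vecMul_dotProduct {K : Type*} [Field K] [CharZero K] {ψ : AddChar R K}
    (hψ : ψ.IsPrimitive) {α : Type*} [Fintype α] [DecidableEq α] {G : Matrix α β R}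
    (hG : Function.Injective G.vecMul) :
    (Matrix.of fun a b => ψ (a ᵥ* G ⬝ᵥ b)).rank = Fintype.card R ^ Fintype.card α := by
  set M : Matrix (α → R) (β → R) K := Matrix.of fun a b => ψ (a ᵥ* G ⬝ᵥ b)
  set N : Matrix (β → R) (α → R) K := Matrix.of fun b a => ψ (-(a ᵥ* G ⬝ᵥ b))
  have hMN : M * N = ((Fintype.card R : K) ^ Fintype.card β) • 1 := by
    ext a a'
    simp only [M, N, Matrix.mul_apply, Matrix.of_apply, ← map_add_eq_mul, ← sub_eq_add_neg,
      ← sub_dotProduct, sum_apply_dotProduct hψ, sub_eq_zero, Matrix.smul_apply,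
      Matrix.one_apply, smul_eq_mul, mul_ite, mul_one, mul_zero]
    exact if_congr hG.eq_iff rfl rfl
  have hscalar : (Fintype.card R : K) ^ Fintype.card β ∈ nonZeroDivisors K :=
    mem_nonZeroDivisors_of_ne_zero (by simp)
  refine le_antisymm (M.rank_le_card_height.trans_eq (by simp)) ?_
  calc Fintype.card R ^ Fintype.card α = (M * N).rank := by
        rw [hMN, Matrix.rank_smul_of_mem_nonZeroDivisors _ hscalar, Matrix.rank_one,
          Fintype.card_fun]
    _ ≤ M.rank := M.rank_mul_le_left N

end AddChar

namespace Matrix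

variable {ι R : Type*} [Fintype ι] {p : ι → Prop} [DecidablePred p]

lemma piEquivPiSubtypeProd_symm_zero_vecMul [NonUnitalNonAssocSemiring R] {Γ : Matrix ι ι R}
    (hind : ∀ u v, p u → p v → Γ u v = 0) (a : {i // p i} → R) :
    (Equiv.piEquivPiSubtypeProd p fun _ => R).symm (a, 0) ᵥ* Γ
      = (Equiv.piEquivPiSubtypeProd p fun _ => R).symm
          (0, a ᵥ* Γ.submatrix Subtype.val Subtype.val) := by
  ext v
  have hv : ((Equiv.piEquivPiSubtypeProd p fun _ => R).symm (a, 0) ᵥ* Γ) v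
      = ∑ u : {i // p i}, a u * Γ u v := by
    simp only [vecMul, dotProduct, ← Fintype.sum_subtype_add_sum_subtype p,
      Equiv.piEquivPiSubtypeProd_symm_apply_of_pos, Equiv.piEquivPiSubtypeProd_symm_apply_of_neg,
      Pi.zero_apply, zero_mul, Finset.sum_const_zero, add_zero]
  rw [hv, Equiv.piEquivPiSubtypeProd_symm_apply]
  split_ifs with hpv
  · exact Finset.sum_eq_zero fun u _ => by rw [hind u v u.2 hpv, mul_zero]
  · rfl

lemma vecMul_submatrix_injective [NonUnitalNonAssocSemiring R] {Γ : Matrix ι ι R}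
    (hΓ : Function.Injective Γ.vecMul) (hind : ∀ u v, p u → p v → Γ u v = 0) :
    Function.Injective (Γ.submatrix (Subtype.val : {i // p i} → ι)
      (Subtype.val : {i // ¬p i} → ι)).vecMul := by
  intro a a' h
  have hext : (Equiv.piEquivPiSubtypeProd p fun _ => R).symm (a, 0) ᵥ* Γ
      = (Equiv.piEquivPiSubtypeProd p fun _ => R).symm (a', 0) ᵥ* Γ := by
    rw [piEquivPiSubtypeProd_symm_zero_vecMul hind, piEquivPiSubtypeProd_symm_zero_vecMul hind]
    exact congrArg (fun w => (Equiv.piEquivPiSubtypeProd p fun _ => R).symm (0, w)) h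
  exact congrArg Prod.fst ((Equiv.piEquivPiSubtypeProd p _).symm.injective (hΓ hext))

lemma two_mul_card_le_of_vecMul_injective [DecidableEq ι] [NonUnitalNonAssocSemiring R]
    [Fintype R] [Nontrivial R]
    {Γ : Matrix ι ι R} (hΓ : Function.Injective Γ.vecMul) {S : Finset ι}
    (hS : ∀ u v, u ∈ S → v ∈ S → Γ u v = 0) :
    2 * S.card ≤ Fintype.card ι := by
  have hcard := Fintype.card_le_of_injective _ (vecMul_submatrix_injective hΓ hS)
  rw [Fintype.card_fun, Fintype.card_fun, Nat.pow_le_pow_iff_right Fintype.one_lt_card,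
    Fintype.card_subtype_compl, Fintype.card_coe] at hcard
  have := S.card_le_univ
  omega

lemma sum_ite_lt_eq_vecMul_dotProduct [LinearOrder ι] [CommSemiring R] {Γ : Matrix ι ι R}
    (hΓ : Γ.IsSymm) (hbip : ∀ u v, (p u ↔ p v) → Γ u v = 0) (x : ι → R) :
    (∑ u, ∑ v, if u < v then Γ u v * x u * x v else 0) =
      Subtype.restrict p x ᵥ* Γ.submatrix Subtype.val Subtype.val ⬝ᵥ
        fun i : {i // ¬p i} => x i := by
  set T : ι → ι → R := fun u v => if p u ∧ ¬p v then Γ u v * x u * x v else 0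
  have hsplit : ∀ u v, Γ u v * x u * x v = T u v + T v u := by
    intro u v
    by_cases hu : p u <;> by_cases hv : p v <;>
      simp [T, hu, hv, hbip u v, hΓ.apply u v, mul_right_comm]
  have hdiag : ∀ u, T u u = 0 := fun u => if_neg fun h => h.2 h.1
  calc (∑ u, ∑ v, if u < v then Γ u v * x u * x v else 0)
      = (∑ u, ∑ v, if u < v then T u v else 0) + ∑ u, ∑ v, if v < u then T u v else 0 := by
        rw [Finset.sum_comm (f := fun u v => if v < u then T u v else 0), ← Finset.sum_add_distrib]
        simp_rw [← Finset.sum_add_distrib, hsplit, ite_add_zero]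
    _ = ∑ u, ∑ v, T u v := by
        rw [← Finset.sum_add_distrib]
        refine Finset.sum_congr rfl fun u _ => ?_
        rw [← Finset.sum_add_distrib]
        refine Finset.sum_congr rfl fun v _ => ?_
        rcases lt_trichotomy u v with h | rfl | h
        · simp [h, h.not_gt]
        · simp [hdiag]
        · simp [h, h.not_gt]
    _ = ∑ u : {i // p i}, ∑ v : {i // ¬p i}, Γ u v * x u * x v := by
        rw [← Fintype.sum_subtype_add_sum_subtype p,
          Fintype.sum_eq_zero (fun u : {i // ¬p i} => ∑ v, T u v) fun u =>
            Finset.sum_eq_zero fun v _ => if_neg fun h => u.2 h.1, add_zero]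
        refine Finset.sum_congr rfl fun u _ => ?_
        rw [← Fintype.sum_subtype_add_sum_subtype p,
          Fintype.sum_eq_zero (fun v : {i // p i} => T u v) fun v => if_neg fun h => h.2 v.2,
          zero_add]
        exact Finset.sum_congr rfl fun v _ => if_pos ⟨u.2, v.2⟩
    _ = _ := by
        simp only [dotProduct, vecMul, Subtype.restrict, submatrix_apply, Finset.sum_mul]
        exact Finset.sum_comm.trans (Fintype.sum_congr _ _ fun v =>
          Fintype.sum_congr _ _ fun u => by ring)

end Matrix

section Flattening

variable {ι α K : Type*} [Fintype ι] [DecidableEq ι] [Fintype α]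

def flattening (ψ : (ι → α) → K) (p : ι → Prop) [DecidablePred p] :
    Matrix ({i // p i} → α) ({i // ¬p i} → α) K :=
  Matrix.of fun a b => ψ ((Equiv.piEquivPiSubtypeProd p fun _ => α).symm (a, b))

lemma rank_flattening_le [Field K] {ψ : (ι → α) → K} {N : ℕ} {f : Fin N → ι → α → K}
    (hψ : ∀ x, ψ x = ∑ i, ∏ j, f i j (x j)) (p : ι → Prop) [DecidablePred p] :
    (flattening ψ p).rank ≤ N := by
  have hmul : flattening ψ p = (Matrix.of fun a i => ∏ j : {i // p i}, f i j (a j)) *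
      Matrix.of fun i b => ∏ j : {i // ¬p i}, f i j (b j) := by
    ext a b
    simp only [flattening, hψ, Matrix.mul_apply, Matrix.of_apply,
      ← Fintype.prod_subtype_mul_prod_subtype p, Equiv.piEquivPiSubtypeProd_symm_apply_of_pos,
      Equiv.piEquivPiSubtypeProd_symm_apply_of_neg]
  rw [hmul]
  exact (rank_mul_le_right _ _).trans ((rank_le_card_height _).trans_eq (Fintype.card_fin N))

lemma exists_eq_sum_prod_of_eq_prod_restrict [DecidableEq α] [CommSemiring K] {ψ : (ι → α) → K}
    {p : ι → Prop} [DecidablePred p] (F : ({i // p i} → α) → ι → α → K)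
    (hψ : ∀ x, ψ x = ∏ j, F (Subtype.restrict p x) j (x j)) :
    ∃ f : Fin (Fintype.card α ^ Fintype.card {i // p i}) → ι → α → K,
      ∀ x, ψ x = ∑ i, ∏ j, f i j (x j) := by
  let e := Fintype.equivFinOfCardEq (Fintype.card_fun (α := {i // p i}) (β := α))
  refine ⟨fun i j t => if ∀ h : p j, t = e.symm i ⟨j, h⟩ then F (e.symm i) j t else 0,
    fun x => ?_⟩
  rw [e.symm.sum_comp fun a => ∏ j, if ∀ h : p j, x j = a ⟨j, h⟩ then F a j (x j) else 0]
  have hmatch : ∀ a : {i // p i} → α,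
      (∀ j ∈ Finset.univ, ∀ h : p j, x j = a ⟨j, h⟩) ↔ Subtype.restrict p x = a := by
    simp [funext_iff, Subtype.forall]
  simp_rw [Finset.prod_ite_zero, hmatch, Fintype.sum_ite_eq, hψ]

end Flattening

section GraphState

variable {d n : ℕ} [NeZero d] {ω : ℂ} {Γ : Matrix (Fin n) (Fin n) (ZMod d)}
  {p : Fin n → Prop} [DecidablePred p]

lemma rank_flattening_le_schmidtRank {ψ : (Fin n → ZMod d) → ℂ}
    (h : ∃ R, ∃ f : Fin R → Fin n → ZMod d → ℂ, ∀ x, ψ x = ∑ i, ∏ j, f i j (x j)) :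
    (flattening ψ p).rank ≤ schmidtRank ψ := by
  obtain ⟨f, hf⟩ := Nat.sInf_mem h
  exact rank_flattening_le hf p

lemma graphState_eq_of_bipartite (hω : ω ^ d = 1) (hΓ : Γ.IsSymm)
    (hbip : ∀ u v, (p u ↔ p v) → Γ u v = 0) (x : Fin n → ZMod d) :
    graphState d n ω Γ x = (((d : ℝ) ^ (-(n : ℝ) / 2) : ℝ) : ℂ) *
      AddChar.zmodChar d hω (Subtype.restrict p x ᵥ* Γ.submatrix Subtype.val Subtype.val ⬝ᵥ
        fun i : {i // ¬p i} => x i) := by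
  rw [graphState, AddChar.zmodChar_apply, sum_ite_lt_eq_vecMul_dotProduct hΓ hbip]

lemma exists_graphState_eq_sum_prod (hω : ω ^ d = 1) (hΓ : Γ.IsSymm)
    (hbip : ∀ u v, (p u ↔ p v) → Γ u v = 0) :
    ∃ f : Fin (d ^ Fintype.card {i // p i}) → Fin n → ZMod d → ℂ,
      ∀ x, graphState d n ω Γ x = ∑ i, ∏ j, f i j (x j) := by
  set G := Γ.submatrix (Subtype.val : {i // p i} → Fin n) (Subtype.val : {i // ¬p i} → Fin n)
  set F : ({i // p i} → ZMod d) → Fin n → ZMod d → ℂ := fun a j t =>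
    (((d : ℝ) ^ (-(1 : ℝ) / 2) : ℝ) : ℂ) *
      if h : p j then 1 else AddChar.zmodChar d hω ((a ᵥ* G) ⟨j, h⟩ * t)
  have hprod : ∀ x, graphState d n ω Γ x = ∏ j, F (Subtype.restrict p x) j (x j) := by
    intro x
    dsimp only [F]
    rw [graphState_eq_of_bipartite hω hΓ hbip, Finset.prod_mul_distrib, Finset.prod_const,
      Finset.card_univ, Fintype.card_fin, ← Complex.ofReal_pow,
      ← Real.rpow_mul_natCast (Nat.cast_nonneg d), ← Fintype.prod_subtype_mul_prod_subtype p,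
      Fintype.prod_eq_one _ fun j => dif_pos j.2, one_mul, dotProduct, AddChar.map_finsetSum]
    congr 1
    · congr 3; ring
    · exact Finset.prod_congr rfl fun j _ => by rw [dif_neg j.2]
  have h := exists_eq_sum_prod_of_eq_prod_restrict F hprod
  rwa [ZMod.card] at h

lemma flattening_graphState (hω : ω ^ d = 1) (hΓ : Γ.IsSymm)
    (hbip : ∀ u v, (p u ↔ p v) → Γ u v = 0) :
    flattening (graphState d n ω Γ) p = (((d : ℝ) ^ (-(n : ℝ) / 2) : ℝ) : ℂ) • Matrix.of
      fun a b => AddChar.zmodChar d hω (a ᵥ* Γ.submatrix Subtype.val Subtype.val ⬝ᵥ b) := by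
  ext a b
  simp only [flattening, graphState_eq_of_bipartite hω hΓ hbip, of_apply, Matrix.smul_apply,
    smul_eq_mul, Subtype.restrict_def, Function.comp_def,
    Equiv.piEquivPiSubtypeProd_symm_apply_of_pos, Equiv.piEquivPiSubtypeProd_symm_apply_of_neg]

theorem schmidtRank_graphState_of_bipartite (hω : IsPrimitiveRoot ω d) (hΓ : Γ.IsSymm)
    (hbip : ∀ u v, (p u ↔ p v) → Γ u v = 0)
    (hG : Function.Injective (Γ.submatrix (Subtype.val : {i // p i} → Fin n)
      (Subtype.val : {i // ¬p i} → Fin n)).vecMul) :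
    schmidtRank (graphState d n ω Γ) = d ^ Fintype.card {i // p i} := by
  obtain ⟨f, hf⟩ := exists_graphState_eq_sum_prod hω.pow_eq_one hΓ hbip
  have hscalar : (((d : ℝ) ^ (-(n : ℝ) / 2) : ℝ) : ℂ) ∈ nonZeroDivisors ℂ :=
    mem_nonZeroDivisors_of_ne_zero <| Complex.ofReal_ne_zero.2 <|
      (Real.rpow_pos_of_pos (Nat.cast_pos.2 (NeZero.pos d)) _).ne'
  refine le_antisymm (Nat.sInf_le ⟨f, hf⟩) ?_
  calc d ^ Fintype.card {i // p i} = (flattening (graphState d n ω Γ) p).rank := by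
        rw [flattening_graphState hω.pow_eq_one hΓ hbip,
          rank_smul_of_mem_nonZeroDivisors _ hscalar,
          AddChar.rank_of_vecMul_dotProduct (AddChar.zmodChar_primitive_of_primitive_root d hω) hG,
          ZMod.card]
    _ ≤ schmidtRank (graphState d n ω Γ) := rank_flattening_le_schmidtRank ⟨_, f, hf⟩

end GraphState

theorem schmidtRank_two_colorable_invertible_general
    (d n : ℕ) (hd : Nat.Prime d)
    (ω : ℂ) (hω : IsPrimitiveRoot ω d)
    (Γ : Matrix (Fin n) (Fin n) (ZMod d)) (hΓsymm : Γ.IsSymm)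
    (A : Finset (Fin n))
    (hcol : ∀ u v : Fin n, (u ∈ A ∧ v ∈ A) ∨ (u ∉ A ∧ v ∉ A) → Γ u v = 0)
    (hinv : IsUnit Γ) :
    Even n ∧ A.card = n / 2 ∧ Aᶜ.card = n / 2 ∧
      schmidtRank (graphState d n ω Γ) = d ^ (n / 2) := by
  have : Fact d.Prime := ⟨hd⟩
  have hbip : ∀ u v, (u ∈ A ↔ v ∈ A) → Γ u v = 0 := fun u v h => hcol u v (by tauto)
  have hindA : ∀ u v, u ∈ A → v ∈ A → Γ u v = 0 := fun u v hu hv => hbip u v (iff_of_true hu hv)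
  have hindB : ∀ u v, u ∈ Aᶜ → v ∈ Aᶜ → Γ u v = 0 := fun u v hu hv =>
    hbip u v (iff_of_false (Finset.mem_compl.1 hu) (Finset.mem_compl.1 hv))
  have hΓ : Function.Injective Γ.vecMul := vecMul_injective_iff_isUnit.2 hinv
  have hA := two_mul_card_le_of_vecMul_injective hΓ hindA
  have hB := two_mul_card_le_of_vecMul_injective hΓ hindB
  have hAB := A.card_add_card_compl
  rw [Fintype.card_fin] at hA hB hAB
  have hhalf : A.card = n / 2 := by omega
  refine ⟨⟨A.card, by omega⟩, hhalf, by omega, ?_⟩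
  rw [schmidtRank_graphState_of_bipartite hω hΓsymm hbip (vecMul_submatrix_injective hΓ hindA),
    Fintype.card_coe, hhalf]

/-- If the weighted graph of `Γ` is two-colorable with parts `A` and `B = Aᶜ` and `Γ`
is invertible over `ZMod d`, then `n` is even, the two parts have size `n/2`, and the
Schmidt rank of the graph state is exactly `d^(n/2)`; i.e., the Schmidt measure attains
its maximal value `⌊n/2⌋`. -/
theorem schmidtRank_two_colorable_invertible
    (d n : ℕ) (hd : Nat.Prime d) (hn : 1 ≤ n)
    (ω : ℂ) (hω : IsPrimitiveRoot ω d)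
    (Γ : Matrix (Fin n) (Fin n) (ZMod d)) (hΓsymm : Γ.IsSymm) (hΓdiag : ∀ u, Γ u u = 0)
    (A : Finset (Fin n))
    (hcol : ∀ u v : Fin n, (u ∈ A ∧ v ∈ A) ∨ (u ∉ A ∧ v ∉ A) → Γ u v = 0)
    (hinv : IsUnit Γ) :
    Even n ∧ A.card = n / 2 ∧ Aᶜ.card = n / 2 ∧
      schmidtRank (graphState d n ω Γ) = d ^ (n / 2) :=
  schmidtRank_two_colorable_invertible_general d n hd ω hω Γ hΓsymm A hcol hinv
end
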